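/- arXiv:2204.11242 — 2 statements merged into one kernel-verified Lean document; each statement's English description precedes it below -/
import Mathlib

section
/- For fixed nonnegative integer n and fixed real β > -1, the Jacobi polynomials satisfy the pointwise limit lim_{α→∞} P_n^{(α,β)}(x) / P_n^{(α,β)}(1) = ((1+x)/2)^n for every x ∈ [-1,1], where P_n^{(α,β)}(1) = Γ(α+n+1)/(n! Γ(α+1)). -/
open Real MeasureTheory Filter Set

noncomputable def jacobiP (n : ℕ) (a b x : ℝ) : ℝ :=
  ∑ s ∈ Finset.range (n + 1),
    (Real.Gamma ((n : ℝ) + a + 1) / ((Nat.factorial s : ℝ) * Real.Gamma ((n : ℝ) + a + 1 - s))) *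
    (Real.Gamma ((n : ℝ) + b + 1) / ((Nat.factorial (n - s) : ℝ) * Real.Gamma (b + 1 + s))) *
    ((x - 1) / 2) ^ (n - s) * ((x + 1) / 2) ^ s

/-! Divided by `P_n^{(α,β)}(1) = Γ(α+n+1) / (n! Γ(α+1))`, the `α`-dependence of the `s`-th term of
`P_n^{(α,β)}(x)` is `Γ(α+1) / Γ(α+1+n-s) = 1 / (α+1)_{n-s}`, the reciprocal of a Pochhammer
polynomial of degree `n - s`. So every term with `s < n` vanishes as `α → ∞`, and the term `s = n`
is exactly `((1+x)/2)^n`. -/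
theorem Polynomial.tendsto_ascPochhammer_eval_atTop {𝕜 : Type*} [NormedField 𝕜] [LinearOrder 𝕜]
    [IsStrictOrderedRing 𝕜] [OrderTopology 𝕜] {k : ℕ} (hk : k ≠ 0) :
    Tendsto (fun x => (ascPochhammer 𝕜 k).eval x) atTop atTop :=
  tendsto_atTop_of_leadingCoeff_nonneg _
    (natDegree_pos_iff_degree_pos.mp
      (by rwa [ascPochhammer_natDegree (S := 𝕜), Nat.pos_iff_ne_zero]))
    (zero_le_one.trans (monic_ascPochhammer 𝕜 k).leadingCoeff.ge)

theorem Real.Gamma_add_nat_eq_mul_ascPochhammer (n : ℕ) {z : ℝ} (hz : ∀ k : ℕ, z ≠ -k) :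
    Gamma (z + n) = Gamma z * (ascPochhammer ℝ n).eval z := by
  induction n with
  | zero => simp
  | succ n ih =>
    have hzn : z + n ≠ 0 := fun h => hz n (eq_neg_of_add_eq_zero_left h)
    rw [Nat.cast_succ, ← add_assoc, Gamma_add_one hzn, ih, ascPochhammer_succ_eval]
    ring

theorem jacobiP_one (n : ℕ) (a : ℝ) {b : ℝ} (hb : -1 < b) :
    jacobiP n a b 1 = Gamma (a + n + 1) / ((n.factorial : ℝ) * Gamma (a + 1)) := by
  have hΓ : Gamma (b + 1 + n) ≠ 0 :=
    (Gamma_pos_of_pos (by linarith [(n.cast_nonneg : (0 : ℝ) ≤ n)])).ne'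
  rw [jacobiP, Finset.sum_eq_single_of_mem n (Finset.self_mem_range_succ n)]
  · rw [Nat.sub_self, show (n : ℝ) + b + 1 = b + 1 + n by ring,
      show (n : ℝ) + a + 1 - n = a + 1 by ring, show (n : ℝ) + a + 1 = a + n + 1 by ring]
    simp [hΓ]
  · intro s hs hsn
    have : n - s ≠ 0 := by rw [Finset.mem_range] at hs; omega
    simp [this]

theorem jacobiP_div_jacobiP_one (n : ℕ) {a b : ℝ} (ha : -1 < a) (hb : -1 < b) (x : ℝ) :
    jacobiP n a b x / jacobiP n a b 1 =
      ∑ s ∈ Finset.range (n + 1),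
        n.choose s * (Gamma (n + b + 1) / Gamma (b + 1 + s)) *
          ((x - 1) / 2) ^ (n - s) * ((x + 1) / 2) ^ s / (ascPochhammer ℝ (n - s)).eval (a + 1) := by
  rw [jacobiP_one n a hb, jacobiP, Finset.sum_div]
  refine Finset.sum_congr rfl fun s hs => ?_
  have hsn : s ≤ n := Nat.lt_succ_iff.mp (Finset.mem_range.mp hs)
  have hpos : 0 < a + 1 := by linarith
  have hΓ : Gamma ((n : ℝ) + a + 1 - s) =
      Gamma (a + 1) * (ascPochhammer ℝ (n - s)).eval (a + 1) := by
    rw [← Gamma_add_nat_eq_mul_ascPochhammer _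
      fun k h => by linarith [(k.cast_nonneg : (0 : ℝ) ≤ k)], Nat.cast_sub hsn]
    ring_nf
  have : 0 < (ascPochhammer ℝ (n - s)).eval (a + 1) := ascPochhammer_pos _ _ hpos
  have : 0 < Gamma (a + 1) := Gamma_pos_of_pos hpos
  have : 0 < Gamma (a + n + 1) := Gamma_pos_of_pos (by linarith [(n.cast_nonneg : (0 : ℝ) ≤ n)])
  have : 0 < Gamma (b + 1 + s) := Gamma_pos_of_pos (by linarith [(s.cast_nonneg : (0 : ℝ) ≤ s)])
  rw [hΓ, Nat.cast_choose ℝ hsn, show (n : ℝ) + a + 1 = a + n + 1 by ring]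
  field_simp

theorem jacobi_parameter_limit_general (n : ℕ) (β : ℝ) (hβ : -1 < β) (x : ℝ) :
    (∀ α : ℝ, -1 < α →
        jacobiP n α β 1 = Real.Gamma (α + n + 1) / ((Nat.factorial n : ℝ) * Real.Gamma (α + 1))) ∧
    Filter.Tendsto (fun α : ℝ => jacobiP n α β x / jacobiP n α β 1) Filter.atTop
      (nhds (((1 + x) / 2) ^ n)) := by
  refine ⟨fun α _ => jacobiP_one n α hβ, ?_⟩
  have hvanish : ∀ s ∈ Finset.range n, Tendsto (fun α : ℝ =>
      n.choose s * (Gamma (n + β + 1) / Gamma (β + 1 + s)) * ((x - 1) / 2) ^ (n - s) *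
        ((x + 1) / 2) ^ s / (ascPochhammer ℝ (n - s)).eval (α + 1)) atTop (nhds 0) := by
    intro s hs
    have hns : n - s ≠ 0 := by rw [Finset.mem_range] at hs; omega
    have hpoch := (Polynomial.tendsto_ascPochhammer_eval_atTop (𝕜 := ℝ) hns).comp
      (tendsto_atTop_add_const_right _ 1 tendsto_id)
    simpa [div_eq_mul_inv] using tendsto_const_nhds.mul hpoch.inv_tendsto_atTop
  have hlim := (tendsto_finsetSum _ hvanish).add_const (((1 + x) / 2) ^ n)
  rw [Finset.sum_const_zero, zero_add] at hlim
  refine hlim.congr' ?_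
  filter_upwards [eventually_gt_atTop (-1)] with α hα
  have hΓ : Gamma (β + 1 + n) ≠ 0 :=
    (Gamma_pos_of_pos (by linarith [(n.cast_nonneg : (0 : ℝ) ≤ n)])).ne'
  rw [jacobiP_div_jacobiP_one n hα hβ, Finset.sum_range_succ, Nat.sub_self,
    show (n : ℝ) + β + 1 = β + 1 + n by ring]
  simp [hΓ, add_comm x]

theorem jacobi_parameter_limit (n : ℕ) (β : ℝ) (hβ : -1 < β) (x : ℝ)
    (hx : x ∈ Set.Icc (-1 : ℝ) 1) :
    (∀ α : ℝ, -1 < α →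
        jacobiP n α β 1 = Real.Gamma (α + n + 1) / ((Nat.factorial n : ℝ) * Real.Gamma (α + 1))) ∧
    Filter.Tendsto (fun α : ℝ => jacobiP n α β x / jacobiP n α β 1) Filter.atTop
      (nhds (((1 + x) / 2) ^ n)) :=
  jacobi_parameter_limit_general n β hβ x
end

section
/- Let t, φ : [a,b] → ℝ with t continuous, t(x) > t(a) for all x ∈ (a,b], t(x) = t(a) + a₀(x-a) + o(x-a) with a₀ > 0, and φ(x) = b₀(x-a)^{γ-1}(1+o(1)) as x → a⁺ with b₀ > 0, γ > 0, and suppose φ e^{-q t} is integrable on (a,b) for all large q. Then ∫_a^b φ(x) e^{-q t(x)} dx = e^{-q t(a)} (Γ(γ) b₀ a₀^{-γ} q^{-γ} (1 + o(1))) as q → ∞. -/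
/-!
Write `s = t - t a`. For small `η > 0` there is `c ∈ (a, b]` such that on `(a, c)` the
function `s` lies between `(a₀ ∓ η) (x - a)` and `φ` between `(b₀ ∓ η) (x - a) ^ (γ - 1)`.
There the integral is squeezed between multiples of `∫ (x - a) ^ (γ - 1) e ^ (-q α (x - a))`,
which the substitution `v = q α (x - a)` turns into `q ^ (-γ) α ^ (-γ) (Γ(γ) + o(1))`.
On `[c, b)` the continuous `s` is bounded below by some `m > 0`, so that piece is
`O(e ^ (-m q)) = o(q ^ (-γ))`. Letting `η → 0` gives the asymptotics.
-/

open Real MeasureTheory Filter Set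
open scoped Topology

theorem tendsto_of_forall_eventually_sandwich {α β : Type*} {f : Filter α} {l : Filter β}
    [l.NeBot] {F : α → ℝ} {lo hi : β → ℝ} {L : ℝ}
    (hlo : Tendsto lo l (𝓝 L)) (hhi : Tendsto hi l (𝓝 L))
    (h : ∀ᶠ η in l, ∃ u v : α → ℝ, Tendsto u f (𝓝 (lo η)) ∧
      Tendsto v f (𝓝 (hi η)) ∧ ∀ᶠ x in f, u x ≤ F x ∧ F x ≤ v x) :
    Tendsto F f (𝓝 L) := by
  refine tendsto_order.2 ⟨fun y hy => ?_, fun y hy => ?_⟩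
  · obtain ⟨η, ⟨u, v, hu, -, hF⟩, hyη⟩ := (h.and (hlo.eventually_const_lt hy)).exists
    filter_upwards [hu.eventually_const_lt hyη, hF] with x hux hFx using hux.trans_le hFx.1
  · obtain ⟨η, ⟨u, v, -, hv, hF⟩, hyη⟩ := (h.and (hhi.eventually_lt_const hy)).exists
    filter_upwards [hv.eventually_lt_const hyη, hF] with x hvx hFx using hFx.2.trans_lt hvx

theorem tendsto_rpow_mul_integral_mul_exp_nhds_zero {α : Type*} [MeasurableSpace α]
    {μ : Measure α} {g s : α → ℝ} {m Q : ℝ} (γ : ℝ) (hm : 0 < m) (hs : ∀ᵐ x ∂μ, m ≤ s x)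
    (hQ : Integrable (fun x => g x * exp (-(Q * s x))) μ) :
    Tendsto (fun q => q ^ γ * ∫ x, g x * exp (-(q * s x)) ∂μ) atTop (𝓝 0) := by
  set K := ∫ x, |g x * exp (-(Q * s x))| ∂μ
  have hbound : ∀ q, Q ≤ q →
      ‖∫ x, g x * exp (-(q * s x)) ∂μ‖ ≤ exp (Q * m) * K * exp (-m * q) := by
    intro q hq
    have hle : ∀ᵐ x ∂μ, ‖g x * exp (-(q * s x))‖ ≤
        |g x * exp (-(Q * s x))| * exp (-((q - Q) * m)) := by
      filter_upwards [hs] with x hx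
      have hsplit : exp (-(q * s x)) = exp (-(Q * s x)) * exp (-((q - Q) * s x)) := by
        rw [← exp_add]; ring_nf
      rw [Real.norm_eq_abs, hsplit, ← mul_assoc, abs_mul _ (exp _), abs_exp]
      gcongr
    refine (norm_integral_le_of_norm_le (hQ.abs.mul_const _) hle).trans_eq ?_
    rw [integral_mul_const, show exp (-((q - Q) * m)) = exp (Q * m) * exp (-m * q) by
      rw [← exp_add]; ring_nf]
    ring
  have hzero :=
    (tendsto_rpow_mul_exp_neg_mul_atTop_nhds_zero γ m hm).const_mul (exp (Q * m) * K)
  rw [mul_zero] at hzero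
  refine squeeze_zero_norm' ?_ hzero
  filter_upwards [eventually_ge_atTop Q, eventually_ge_atTop 0] with q hQq hq
  rw [norm_mul, Real.norm_of_nonneg (rpow_nonneg hq γ)]
  calc q ^ γ * ‖∫ x, g x * exp (-(q * s x)) ∂μ‖
      ≤ q ^ γ * (exp (Q * m) * K * exp (-m * q)) := by gcongr; exact hbound q hQq
    _ = _ := by ring

theorem tendsto_rpow_mul_intervalIntegral_rpow_mul_exp {γ α δ : ℝ} (hγ : 0 < γ)
    (hα : 0 < α) (hδ : 0 < δ) :
    Tendsto (fun q : ℝ => q ^ γ * ∫ u in (0 : ℝ)..δ, u ^ (γ - 1) * exp (-(q * α * u)))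
      atTop (𝓝 (α ^ (-γ) * Gamma γ)) := by
  have hGamma : Tendsto (fun q : ℝ => ∫ v in (0 : ℝ)..(q * α * δ), v ^ (γ - 1) * exp (-v))
      atTop (𝓝 (Gamma γ)) := by
    rw [Gamma_eq_integral hγ]
    simp_rw [mul_comm (exp _)]
    exact intervalIntegral_tendsto_integral_Ioi 0
      ((GammaIntegral_convergent hγ).congr_fun (fun _ _ => mul_comm _ _) measurableSet_Ioi)
      ((tendsto_id.atTop_mul_const hα).atTop_mul_const hδ)
  refine (hGamma.const_mul (α ^ (-γ))).congr' ?_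
  filter_upwards [eventually_gt_atTop 0] with q hq
  have hqα : 0 < q * α := mul_pos hq hα
  have hsubst : ∫ v in (0 : ℝ)..(q * α * δ), v ^ (γ - 1) * exp (-v)
      = (q * α) ^ γ * ∫ u in (0 : ℝ)..δ, u ^ (γ - 1) * exp (-(q * α * u)) := by
    have h := intervalIntegral.integral_comp_mul_left (a := 0) (b := δ)
      (fun v => v ^ (γ - 1) * exp (-v)) hqα.ne'
    rw [mul_zero, smul_eq_mul, eq_inv_mul_iff_mul_eq₀ hqα.ne'] at h
    rw [← h, ← intervalIntegral.integral_const_mul, ← intervalIntegral.integral_const_mul]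
    refine intervalIntegral.integral_congr fun u hu => ?_
    rw [uIcc_of_le hδ.le] at hu
    rw [mul_rpow hqα.le hu.1, rpow_sub_one hqα.ne']
    field_simp
  rw [hsubst, mul_rpow hq.le hα.le, rpow_neg hα.le]
  field_simp

theorem tendsto_rpow_mul_setIntegral_rpow_sub_mul_exp {a c γ α : ℝ} (hac : a < c)
    (hγ : 0 < γ) (hα : 0 < α) :
    Tendsto (fun q : ℝ =>
        q ^ γ * ∫ x in Ioo a c, (x - a) ^ (γ - 1) * exp (-(q * α * (x - a))))
      atTop (𝓝 (α ^ (-γ) * Gamma γ)) := by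
  refine (tendsto_rpow_mul_intervalIntegral_rpow_mul_exp hγ hα (sub_pos.2 hac)).congr
    fun q => ?_
  rw [← integral_Ioc_eq_integral_Ioo, ← intervalIntegral.integral_of_le hac.le,
    intervalIntegral.integral_comp_sub_right (fun u => u ^ (γ - 1) * exp (-(q * α * u))),
    sub_self]

theorem integrableOn_rpow_sub_mul_exp {a c γ α q : ℝ} (hac : a ≤ c) (hγ : 0 < γ) :
    IntegrableOn (fun x => (x - a) ^ (γ - 1) * exp (-(q * α * (x - a)))) (Ioo a c) := by
  rw [← intervalIntegrable_iff_integrableOn_Ioo_of_le hac]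
  have hrpow : IntervalIntegrable (fun x : ℝ => (x - a) ^ (γ - 1)) volume a c := by
    simpa using (intervalIntegral.intervalIntegrable_rpow' (a := 0) (b := c - a)
      (by linarith : (-1 : ℝ) < γ - 1)).comp_sub_right a
  exact hrpow.mul_continuousOn (by fun_prop)

theorem setIntegral_mul_exp_sandwich {a c γ q α₁ α₂ β₁ β₂ : ℝ} {g s : ℝ → ℝ}
    (hac : a ≤ c) (hγ : 0 < γ) (hq : 0 ≤ q) (hβ₁ : 0 ≤ β₁)
    (hs : ∀ x ∈ Ioo a c, α₁ * (x - a) ≤ s x ∧ s x ≤ α₂ * (x - a))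
    (hg : ∀ x ∈ Ioo a c, β₁ * (x - a) ^ (γ - 1) ≤ g x ∧ g x ≤ β₂ * (x - a) ^ (γ - 1))
    (hint : IntegrableOn (fun x => g x * exp (-(q * s x))) (Ioo a c)) :
    β₁ * ∫ x in Ioo a c, (x - a) ^ (γ - 1) * exp (-(q * α₂ * (x - a)))
        ≤ ∫ x in Ioo a c, g x * exp (-(q * s x)) ∧
      ∫ x in Ioo a c, g x * exp (-(q * s x))
        ≤ β₂ * ∫ x in Ioo a c, (x - a) ^ (γ - 1) * exp (-(q * α₁ * (x - a))) := by
  rw [← integral_const_mul, ← integral_const_mul]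
  constructor
  · refine setIntegral_mono_on ((integrableOn_rpow_sub_mul_exp hac hγ).const_mul _) hint
      measurableSet_Ioo fun x hx => ?_
    have hp : 0 ≤ β₁ * (x - a) ^ (γ - 1) :=
      mul_nonneg hβ₁ (rpow_nonneg (sub_pos.2 hx.1).le _)
    have hexp : exp (-(q * α₂ * (x - a))) ≤ exp (-(q * s x)) := by
      rw [exp_le_exp, neg_le_neg_iff, mul_assoc]
      exact mul_le_mul_of_nonneg_left (hs x hx).2 hq
    rw [← mul_assoc]
    exact mul_le_mul (hg x hx).1 hexp (exp_pos _).le (hp.trans (hg x hx).1)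
  · refine setIntegral_mono_on hint ((integrableOn_rpow_sub_mul_exp hac hγ).const_mul _)
      measurableSet_Ioo fun x hx => ?_
    have hp : 0 ≤ β₁ * (x - a) ^ (γ - 1) :=
      mul_nonneg hβ₁ (rpow_nonneg (sub_pos.2 hx.1).le _)
    have hexp : exp (-(q * s x)) ≤ exp (-(q * α₁ * (x - a))) := by
      rw [exp_le_exp, neg_le_neg_iff, mul_assoc]
      exact mul_le_mul_of_nonneg_left (hs x hx).1 hq
    rw [← mul_assoc]
    exact mul_le_mul (hg x hx).2 hexp (exp_pos _).le ((hp.trans (hg x hx).1).trans (hg x hx).2)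

theorem eventually_sub_mul_le_and_le_add_mul_of_isLittleO {α : Type*} {l : Filter α}
    {f w : α → ℝ} {c η : ℝ} (h : (fun x => f x - c * w x) =o[l] w) (hη : 0 < η)
    (hw : ∀ᶠ x in l, 0 ≤ w x) :
    ∀ᶠ x in l, (c - η) * w x ≤ f x ∧ f x ≤ (c + η) * w x := by
  filter_upwards [h.def hη, hw] with x hx hwx
  rw [Real.norm_eq_abs, Real.norm_of_nonneg hwx, abs_le] at hx
  rw [sub_mul, add_mul]
  constructor <;> linarith [hx.1, hx.2]

theorem setIntegral_Ioo_eq_add_setIntegral_Ico {E : Type*} [NormedAddCommGroup E]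
    [NormedSpace ℝ E] {a b c : ℝ} {f : ℝ → E} (hac : a < c) (hcb : c ≤ b) (hf : IntegrableOn f (Ioo a b)) :
    ∫ x in Ioo a b, f x = (∫ x in Ioo a c, f x) + ∫ x in Ico c b, f x := by
  rw [← Ioo_union_Ico_eq_Ioo hac hcb]
  exact setIntegral_union
    ((Iio_disjoint_Ici le_rfl).mono Ioo_subset_Iio_self Ico_subset_Ici_self) measurableSet_Ico
    (hf.mono_set (Ioo_subset_Ioo_right hcb)) (hf.mono_set fun x hx => ⟨hac.trans_le hx.1, hx.2⟩)

theorem exists_sandwich_rpow_mul_setIntegral_mul_exp {a b a₀ b₀ γ η Q : ℝ} {s g : ℝ → ℝ}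
    (hab : a < b) (hγ : 0 < γ) (hs : ContinuousOn s (Icc a b))
    (hpos : ∀ x ∈ Ioc a b, 0 < s x)
    (hsa : (fun x => s x - a₀ * (x - a)) =o[𝓝[>] a] fun x => x - a)
    (hga : (fun x => g x - b₀ * (x - a) ^ (γ - 1)) =o[𝓝[>] a]
      fun x => (x - a) ^ (γ - 1))
    (hint : ∀ q ≥ Q, IntegrableOn (fun x => g x * exp (-(q * s x))) (Ioo a b))
    (hη : 0 < η) (hηa : η < a₀) (hηb : η ≤ b₀) :
    ∃ u v : ℝ → ℝ, Tendsto u atTop (𝓝 ((b₀ - η) * ((a₀ + η) ^ (-γ) * Gamma γ))) ∧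
      Tendsto v atTop (𝓝 ((b₀ + η) * ((a₀ - η) ^ (-γ) * Gamma γ))) ∧
      ∀ᶠ q in atTop, u q ≤ q ^ γ * ∫ x in Ioo a b, g x * exp (-(q * s x)) ∧
        q ^ γ * ∫ x in Ioo a b, g x * exp (-(q * s x)) ≤ v q := by
  have hnear : ∀ᶠ x in 𝓝[>] a,
      ((a₀ - η) * (x - a) ≤ s x ∧ s x ≤ (a₀ + η) * (x - a)) ∧
      ((b₀ - η) * (x - a) ^ (γ - 1) ≤ g x ∧ g x ≤ (b₀ + η) * (x - a) ^ (γ - 1)) :=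
    (eventually_sub_mul_le_and_le_add_mul_of_isLittleO hsa hη
      (eventually_nhdsWithin_of_forall fun x hx => (sub_pos.2 hx).le)).and
    (eventually_sub_mul_le_and_le_add_mul_of_isLittleO hga hη
      (eventually_nhdsWithin_of_forall fun x hx => rpow_nonneg (sub_pos.2 hx).le _))
  obtain ⟨u₀, hau₀, hsub⟩ := mem_nhdsGT_iff_exists_Ioo_subset.mp hnear
  set c := min u₀ b
  have hac : a < c := lt_min hau₀ hab
  have hcb : c ≤ b := min_le_right _ _
  have hIoo : Ioo a c ⊆ Ioo a u₀ := Ioo_subset_Ioo_right (min_le_left _ _)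
  have hIco : Ico c b ⊆ Ioo a b := fun x hx => ⟨hac.trans_le hx.1, hx.2⟩
  obtain ⟨m, hm, hsm⟩ := isCompact_Icc.exists_forall_le' (hs.mono (Icc_subset_Icc hac.le le_rfl))
    fun x hx => hpos x ⟨hac.trans_le hx.1, hx.2⟩
  have htail := tendsto_rpow_mul_integral_mul_exp_nhds_zero γ hm
    (ae_restrict_of_forall_mem measurableSet_Ico fun x hx => hsm x (Ico_subset_Icc_self hx))
    ((hint Q le_rfl).mono_set hIco)
  refine ⟨fun q => (b₀ - η) * (q ^ γ * ∫ x in Ioo a c,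
        (x - a) ^ (γ - 1) * exp (-(q * (a₀ + η) * (x - a)))) +
        q ^ γ * ∫ x in Ico c b, g x * exp (-(q * s x)),
      fun q => (b₀ + η) * (q ^ γ * ∫ x in Ioo a c,
        (x - a) ^ (γ - 1) * exp (-(q * (a₀ - η) * (x - a)))) +
        q ^ γ * ∫ x in Ico c b, g x * exp (-(q * s x)), ?_, ?_, ?_⟩
  · simpa using ((tendsto_rpow_mul_setIntegral_rpow_sub_mul_exp hac hγ
      (by linarith)).const_mul (b₀ - η)).add htail
  · simpa using ((tendsto_rpow_mul_setIntegral_rpow_sub_mul_exp hac hγ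
      (by linarith)).const_mul (b₀ + η)).add htail
  filter_upwards [eventually_ge_atTop Q, eventually_ge_atTop 0] with q hQq hq
  obtain ⟨hlo, hhi⟩ := setIntegral_mul_exp_sandwich hac.le hγ hq (sub_nonneg.2 hηb)
    (fun x hx => (hsub (hIoo hx)).1) (fun x hx => (hsub (hIoo hx)).2)
    ((hint q hQq).mono_set (Ioo_subset_Ioo_right hcb))
  have hqγ : 0 ≤ q ^ γ := rpow_nonneg hq γ
  rw [setIntegral_Ioo_eq_add_setIntegral_Ico hac hcb (hint q hQq)]
  constructor
  · linarith [mul_le_mul_of_nonneg_left hlo hqγ]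
  · linarith [mul_le_mul_of_nonneg_left hhi hqγ]

theorem laplace_endpoint_asymptotics (a b a₀ b₀ γ : ℝ) (t φ : ℝ → ℝ) (hab : a < b)
    (ht : ContinuousOn t (Set.Icc a b))
    (hmin : ∀ x ∈ Set.Ioc a b, t a < t x)
    (ha₀ : 0 < a₀) (hb₀ : 0 < b₀) (hγ : 0 < γ)
    (hT : (fun x => t x - t a - a₀ * (x - a)) =o[nhdsWithin a (Set.Ioi a)] fun x => x - a)
    (hφ : (fun x => φ x - b₀ * (x - a) ^ (γ - 1)) =o[nhdsWithin a (Set.Ioi a)]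
      fun x => (x - a) ^ (γ - 1))
    (hInt : ∀ᶠ q in Filter.atTop,
      MeasureTheory.IntegrableOn (fun x => φ x * Real.exp (-q * t x)) (Set.Ioo a b)) :
    Filter.Tendsto
      (fun q : ℝ => (∫ x in Set.Ioo a b, φ x * Real.exp (-q * t x)) /
        (Real.exp (-q * t a) * (Real.Gamma γ * b₀ * a₀ ^ (-γ) * q ^ (-γ))))
      Filter.atTop (nhds 1) := by
  have hshift : ∀ q x, φ x * exp (-q * t x) =
      exp (-q * t a) * (φ x * exp (-(q * (t x - t a)))) := by
    intro q x
    rw [mul_left_comm, ← exp_add]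
    ring_nf
  obtain ⟨Q, hQ⟩ := eventually_atTop.mp hInt
  have hInt' : ∀ q ≥ Q, IntegrableOn (fun x => φ x * exp (-(q * (t x - t a)))) (Ioo a b) :=
    fun q hq => IntegrableOn.congr_fun ((hQ q hq).const_mul (exp (-q * t a))⁻¹) (fun x _ => by
      rw [hshift q x, inv_mul_cancel_left₀ (exp_pos _).ne']) measurableSet_Ioo
  have hlo : ContinuousAt (fun η => (b₀ - η) * ((a₀ + η) ^ (-γ) * Gamma γ)) 0 := by
    fun_prop (disch := (left; simp; linarith))
  have hhi : ContinuousAt (fun η => (b₀ + η) * ((a₀ - η) ^ (-γ) * Gamma γ)) 0 := by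
    fun_prop (disch := (left; simp; linarith))
  have hF := tendsto_of_forall_eventually_sandwich (l := 𝓝[>] (0 : ℝ))
    (by simpa using hlo.tendsto.mono_left nhdsWithin_le_nhds)
    (by simpa using hhi.tendsto.mono_left nhdsWithin_le_nhds) <| by
    filter_upwards [Ioo_mem_nhdsGT (lt_min ha₀ hb₀)] with η hη
    exact exists_sandwich_rpow_mul_setIntegral_mul_exp (s := fun x => t x - t a) hab hγ
      (ht.sub continuousOn_const)
      (fun x hx => sub_pos.2 (hmin x hx)) hT hφ hInt' hη.1 (hη.2.trans_le (min_le_left _ _))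
      (hη.2.le.trans (min_le_right _ _))
  have hL : b₀ * (a₀ ^ (-γ) * Gamma γ) ≠ 0 := by positivity
  refine (div_self hL ▸ hF.div_const _).congr' ?_
  filter_upwards [eventually_gt_atTop 0] with q hq
  rw [setIntegral_congr_fun measurableSet_Ioo fun x _ => hshift q x, integral_const_mul,
    rpow_neg hq.le]
  field_simp
end
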